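/- Let u : U → ℝ³ be a smooth vector field with tangential part u_T := P u and normal coordinate u_N := u·n, and for a vector field w set E(w) := ½(∇_Γ w + (∇_Γ w)ᵀ). Then E(u) = E(u_T) − u_N B, where B := b_{αβ}(g^α⊗g^β) is the shape operator; equivalently, ½( ∇_Γ(u_N n) + (∇_Γ(u_N n))ᵀ ) = − u_N B. -/

import Mathlib

noncomputable section

open scoped BigOperators Matrix

abbrev V3 := Fin 3 → ℝ
abbrev V2 := Fin 2 → ℝ

/-- Euclidean dot product on `ℝ³`. -/
def dot3 (a b : V3) : ℝ := ∑ i, a i * b i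

/-- Euclidean norm on `ℝ³`. -/
def norm3 (a : V3) : ℝ := Real.sqrt (dot3 a a)

/-- Partial derivative `∂_α` of a field on (part of) `ℝ²`. -/
def pd2 {E : Type*} [NormedAddCommGroup E] [NormedSpace ℝ E]
    (f : V2 → E) (α : Fin 2) (ξ : V2) : E :=
  fderiv ℝ f ξ (Pi.single α 1)

/-- Partial derivative `∂_i` of a field on (part of) `ℝ³`. -/
def pd3 {E : Type*} [NormedAddCommGroup E] [NormedSpace ℝ E]
    (f : V3 → E) (i : Fin 3) (q : V3) : E :=
  fderiv ℝ f q (Pi.single i 1)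

/-- Covariant tangent basis `g_α = ∂_α R`. -/
def gcov (R : V2 → V3) (α : Fin 2) (ξ : V2) : V3 := pd2 R α ξ

/-- Metric tensor `g_{αβ}`. -/
def gmat (R : V2 → V3) (ξ : V2) : Matrix (Fin 2) (Fin 2) ℝ :=
  Matrix.of fun α β => dot3 (gcov R α ξ) (gcov R β ξ)

/-- Inverse metric `g^{αβ}`. -/
def ginv (R : V2 → V3) (ξ : V2) : Matrix (Fin 2) (Fin 2) ℝ := (gmat R ξ)⁻¹

/-- Contravariant basis `g^α = g^{αβ} g_β`. -/
def gcon (R : V2 → V3) (α : Fin 2) (ξ : V2) : V3 :=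
  ∑ β, ginv R ξ α β • gcov R β ξ

/-- Unit normal `n = (g₁ × g₂)/‖g₁ × g₂‖`. -/
def nrm (R : V2 → V3) (ξ : V2) : V3 :=
  (norm3 (crossProduct (gcov R 0 ξ) (gcov R 1 ξ)))⁻¹ •
    crossProduct (gcov R 0 ξ) (gcov R 1 ξ)

/-- Tangential projection `P = I - n nᵀ`. -/
def Pmat (R : V2 → V3) (ξ : V2) : Matrix (Fin 3) (Fin 3) ℝ :=
  1 - Matrix.of fun i j => nrm R ξ i * nrm R ξ j

/-- Christoffel symbols `Γ^σ_{αβ} = g^σ · ∂_α g_β`. -/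
def chris (R : V2 → V3) (σ α β : Fin 2) (ξ : V2) : ℝ :=
  dot3 (gcon R σ ξ) (pd2 (gcov R β) α ξ)

/-- Second fundamental form `b_{αβ} = n · ∂_α g_β`. -/
def bcov (R : V2 → V3) (α β : Fin 2) (ξ : V2) : ℝ :=
  dot3 (nrm R ξ) (pd2 (gcov R β) α ξ)

/-- Mixed components `b^β_α = g^{βσ} b_{σα}`. -/
def bmix (R : V2 → V3) (β α : Fin 2) (ξ : V2) : ℝ :=
  ∑ σ, ginv R ξ β σ * bcov R σ α ξ

/-- Outer product `(a ⊗ b) w = (b·w) a` as a matrix. -/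
def outer (a b : V3) : Matrix (Fin 3) (Fin 3) ℝ := Matrix.of fun i j => a i * b j

/-- Shape operator `B = b_{αβ} (g^α ⊗ g^β)`. -/
def shapeOp (R : V2 → V3) (ξ : V2) : Matrix (Fin 3) (Fin 3) ℝ :=
  ∑ α, ∑ β, bcov R α β ξ • outer (gcon R α ξ) (gcon R β ξ)

/-- Cartesian (Euclidean) gradient of a scalar field on `ℝ³`. -/
def grad3 (f : V3 → ℝ) (y : V3) : V3 := fun i => fderiv ℝ f y (Pi.single i 1)

/-- Cartesian Jacobian `(∇̂ u)_{ij} = ∂_j u_i` of a vector field on `ℝ³`. -/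
def jac3 (u : V3 → V3) (y : V3) : Matrix (Fin 3) (Fin 3) ℝ :=
  Matrix.of fun i j => fderiv ℝ u y (Pi.single j 1) i

/-- Surface gradient `∇_Γ φ = (∂_α φ) g^α` (curvilinear definition). -/
def gradGamma (R : V2 → V3) (φ : V2 → ℝ) (ξ : V2) : V3 :=
  ∑ α, pd2 φ α ξ • gcon R α ξ

/-- Covariant derivative `∇_Γ u = (P ∂_α u) ⊗ g^α` (curvilinear definition). -/
def covDer (R : V2 → V3) (u : V2 → V3) (ξ : V2) : Matrix (Fin 3) (Fin 3) ℝ :=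
  ∑ α, outer ((Pmat R ξ).mulVec (pd2 u α ξ)) (gcon R α ξ)

/-- Surface divergence `div_Γ u = ∂_α u · g^α` (curvilinear definition). -/
def divGamma (R : V2 → V3) (u : V2 → V3) (ξ : V2) : ℝ :=
  ∑ α, dot3 (pd2 u α ξ) (gcon R α ξ)

/-- Entrywise partial derivative `∂_γ T` of a matrix-valued field. -/
def pdMat (T : V2 → Matrix (Fin 3) (Fin 3) ℝ) (γ : Fin 2) (ξ : V2) :
    Matrix (Fin 3) (Fin 3) ℝ :=
  Matrix.of fun i j => pd2 (fun ξ' => T ξ' i j) γ ξ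

/-- Surface divergence `div_Γ T = (∂_α T)ᵀ g^α` of an operator-valued field. -/
def divGammaMat (R : V2 → V3) (T : V2 → Matrix (Fin 3) (Fin 3) ℝ) (ξ : V2) : V3 :=
  ∑ α, (pdMat T α ξ)ᵀ.mulVec (gcon R α ξ)

/-- Surface rate-of-strain tensor `E(u) = ½(∇_Γ u + (∇_Γ u)ᵀ)`. -/
def strain (R : V2 → V3) (u : V2 → V3) (ξ : V2) : Matrix (Fin 3) (Fin 3) ℝ :=
  (1/2 : ℝ) • (covDer R u ξ + (covDer R u ξ)ᵀ)

/-- The first two coordinates of a point of `ℝ³`. -/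
def emb2 (q : V3) : V2 := fun α => q α.castSucc

/-- Thin-film parametrization `R̃(ξ,ζ) = R(ξ) + ζ n(ξ)`. -/
def Rtilde (R : V2 → V3) (q : V3) : V3 := R (emb2 q) + q 2 • nrm R (emb2 q)

/-- Thin-film covariant basis `G_i = ∂_i R̃`. -/
def Gcov (R : V2 → V3) (i : Fin 3) (q : V3) : V3 := pd3 (Rtilde R) i q

/-- Thin-film metric `G_{ij} = G_i · G_j`. -/
def Gmat (R : V2 → V3) (q : V3) : Matrix (Fin 3) (Fin 3) ℝ :=
  Matrix.of fun i j => dot3 (Gcov R i q) (Gcov R j q)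

/-- Thin-film inverse metric `G^{ij}`. -/
def Ginv (R : V2 → V3) (q : V3) : Matrix (Fin 3) (Fin 3) ℝ := (Gmat R q)⁻¹

/-- Thin-film Christoffel symbols
`Γ̄^k_{ij} = ½ G^{kl}(∂_i G_{jl} + ∂_j G_{il} − ∂_l G_{ij})`. -/
def chrisT (R : V2 → V3) (k i j : Fin 3) (q : V3) : ℝ :=
  (1/2 : ℝ) * ∑ l, Ginv R q k l *
    (pd3 (fun q' => Gmat R q' j l) i q + pd3 (fun q' => Gmat R q' i l) j q
      - pd3 (fun q' => Gmat R q' i j) l q)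


-- algebraic lemmas
section Alg

lemma dot3_eq_dot (a b : V3) : dot3 a b = a ⬝ᵥ b := rfl

lemma dot3_comm (a b : V3) : dot3 a b = dot3 b a := by
  simp [dot3, mul_comm]

lemma dot3_smul_left (c : ℝ) (a b : V3) : dot3 (c • a) b = c * dot3 a b := by
  simp [dot3, Finset.mul_sum, mul_assoc]

lemma dot3_smul_right (c : ℝ) (a b : V3) : dot3 a (c • b) = c * dot3 a b := by
  simp only [dot3, Pi.smul_apply, smul_eq_mul, Finset.mul_sum]
  exact Finset.sum_congr rfl fun i _ => by ring

lemma dot3_add_left (a a' b : V3) : dot3 (a + a') b = dot3 a b + dot3 a' b := by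
  simp [dot3, add_mul, Finset.sum_add_distrib]

lemma dot3_add_right (a b b' : V3) : dot3 a (b + b') = dot3 a b + dot3 a b' := by
  simp [dot3, mul_add, Finset.sum_add_distrib]

lemma dot3_sum_left {m : Type*} (s : Finset m) (v : m → V3) (b : V3) :
    dot3 (∑ x ∈ s, v x) b = ∑ x ∈ s, dot3 (v x) b := by
  simp [dot3, Finset.sum_mul]
  exact Finset.sum_comm

lemma dot3_sum_right {m : Type*} (s : Finset m) (a : V3) (v : m → V3) :
    dot3 a (∑ x ∈ s, v x) = ∑ x ∈ s, dot3 a (v x) := by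
  simp [dot3, Finset.mul_sum]
  exact Finset.sum_comm

lemma dot3_neg_left (a b : V3) : dot3 (-a) b = - dot3 a b := by
  simp [dot3]

lemma dot3_self_nonneg (a : V3) : 0 ≤ dot3 a a :=
  Finset.sum_nonneg fun i _ => mul_self_nonneg _

lemma dot3_self_pos {a : V3} (h : a ≠ 0) : 0 < dot3 a a := by
  rcases (dot3_self_nonneg a).lt_or_eq with h1 | h1
  · exact h1
  · exfalso; apply h; funext i
    have := Finset.sum_eq_zero_iff_of_nonneg (fun j (_ : j ∈ Finset.univ) => mul_self_nonneg (a j)) |>.mp h1.symm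
    have := this i (Finset.mem_univ i)
    have : a i = 0 := by nlinarith
    simpa using this

lemma Pmat_mulVec (R : V2 → V3) (ξ : V2) (v : V3) :
    (Pmat R ξ).mulVec v = v - dot3 (nrm R ξ) v • nrm R ξ := by
  rw [Pmat, Matrix.sub_mulVec, Matrix.one_mulVec]
  funext i
  have h : ∑ j, nrm R ξ i * nrm R ξ j * v j = (∑ j, nrm R ξ j * v j) * nrm R ξ i := by
    rw [Finset.sum_mul]; exact Finset.sum_congr rfl fun j _ => by ring
  simp only [Pi.sub_apply, Pi.smul_apply, smul_eq_mul, Matrix.mulVec, dotProduct,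
    Matrix.of_apply, dot3]
  rw [← h]

lemma outer_smul_left (c : ℝ) (a b : V3) : outer (c • a) b = c • outer a b := by
  ext i j; simp [outer, mul_assoc]

lemma outer_add_left (a a' b : V3) : outer (a + a') b = outer a b + outer a' b := by
  ext i j; simp [outer, add_mul]

lemma outer_neg_left (a b : V3) : outer (-a) b = - outer a b := by
  ext i j; simp [outer]

lemma outer_sum_left {m : Type*} (s : Finset m) (v : m → V3) (b : V3) :
    outer (∑ x ∈ s, v x) b = ∑ x ∈ s, outer (v x) b := by
  ext i j; simp [outer, Finset.sum_mul, Matrix.sum_apply]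

lemma transpose_outer (a b : V3) : (outer a b)ᵀ = outer b a := by
  ext i j; simp [outer, Matrix.transpose_apply, mul_comm]

end Alg

section Geom

variable (R : V2 → V3) (ξ : V2)

/-- abbreviation for the cross product vector -/
def crss (R : V2 → V3) (ξ : V2) : V3 := crossProduct (gcov R 0 ξ) (gcov R 1 ξ)

lemma nrm_eq : nrm R ξ = (norm3 (crss R ξ))⁻¹ • crss R ξ := rfl

lemma crss_ne_zero (hImm : LinearIndependent ℝ ![gcov R 0 ξ, gcov R 1 ξ]) :
    crss R ξ ≠ 0 := by
  intro h
  rw [linearIndependent_fin2] at hImm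
  obtain ⟨h1, h2⟩ := hImm
  simp only [Matrix.cons_val_one, Matrix.head_cons, Matrix.cons_val_zero] at h1 h2
  set a := gcov R 0 ξ with ha
  set b := gcov R 1 ξ with hb
  have hbb : dot3 b b ≠ 0 := ne_of_gt (dot3_self_pos h1)
  have hc0 : a 1 * b 2 - a 2 * b 1 = 0 := by
    have := congrFun h 0; simpa [crss, cross_apply] using this
  have hc1 : a 2 * b 0 - a 0 * b 2 = 0 := by
    have := congrFun h 1; simpa [crss, cross_apply] using this
  have hc2 : a 0 * b 1 - a 1 * b 0 = 0 := by
    have := congrFun h 2; simpa [crss, cross_apply] using this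
  apply h2 (dot3 a b / dot3 b b)
  have key : ∀ i : Fin 3, dot3 b b * a i = dot3 a b * b i := by
    intro i
    fin_cases i
    · show dot3 b b * a 0 = dot3 a b * b 0
      simp only [dot3, Fin.sum_univ_three]
      linear_combination b 1 * hc2 - b 2 * hc1
    · show dot3 b b * a 1 = dot3 a b * b 1
      simp only [dot3, Fin.sum_univ_three]
      linear_combination b 2 * hc0 - b 0 * hc2
    · show dot3 b b * a 2 = dot3 a b * b 2
      simp only [dot3, Fin.sum_univ_three]
      linear_combination b 0 * hc1 - b 1 * hc0
  funext i
  show (dot3 a b / dot3 b b) * b i = a i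
  rw [div_mul_eq_mul_div, div_eq_iff hbb]
  linear_combination - key i

lemma dot3_crss_self_pos (hImm : LinearIndependent ℝ ![gcov R 0 ξ, gcov R 1 ξ]) :
    0 < dot3 (crss R ξ) (crss R ξ) := dot3_self_pos (crss_ne_zero R ξ hImm)

lemma norm3_crss_pos (hImm : LinearIndependent ℝ ![gcov R 0 ξ, gcov R 1 ξ]) :
    0 < norm3 (crss R ξ) :=
  Real.sqrt_pos.mpr (dot3_crss_self_pos R ξ hImm)

lemma dot3_nrm_nrm (hImm : LinearIndependent ℝ ![gcov R 0 ξ, gcov R 1 ξ]) :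
    dot3 (nrm R ξ) (nrm R ξ) = 1 := by
  rw [nrm_eq, dot3_smul_left, dot3_smul_right]
  have h1 := dot3_crss_self_pos R ξ hImm
  have h2 : norm3 (crss R ξ) * norm3 (crss R ξ) = dot3 (crss R ξ) (crss R ξ) :=
    Real.mul_self_sqrt h1.le
  have h3 : norm3 (crss R ξ) ≠ 0 := ne_of_gt (norm3_crss_pos R ξ hImm)
  rw [← h2]
  field_simp

lemma dot3_crss_gcov (α : Fin 2) : dot3 (crss R ξ) (gcov R α ξ) = 0 := by
  rw [dot3_comm, dot3_eq_dot]
  fin_cases α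
  · exact dot_self_cross _ _
  · exact dot_cross_self _ _

lemma dot3_nrm_gcov (α : Fin 2) : dot3 (nrm R ξ) (gcov R α ξ) = 0 := by
  rw [nrm_eq, dot3_smul_left, dot3_crss_gcov, mul_zero]

lemma det_gmat_eq : (gmat R ξ).det = dot3 (crss R ξ) (crss R ξ) := by
  rw [Matrix.det_fin_two]
  simp only [gmat, Matrix.of_apply, crss, cross_apply, dot3, Fin.sum_univ_three]
  simp only [Matrix.cons_val_zero, Matrix.cons_val_one, Matrix.head_cons,
    Matrix.cons_val_two, Matrix.tail_cons]
  ring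

lemma isUnit_det_gmat (hImm : LinearIndependent ℝ ![gcov R 0 ξ, gcov R 1 ξ]) :
    IsUnit (gmat R ξ).det := by
  rw [det_gmat_eq]
  exact (ne_of_gt (dot3_crss_self_pos R ξ hImm)).isUnit

lemma dot3_gcon_gcov (hImm : LinearIndependent ℝ ![gcov R 0 ξ, gcov R 1 ξ]) (α γ : Fin 2) :
    dot3 (gcon R α ξ) (gcov R γ ξ) = (1 : Matrix (Fin 2) (Fin 2) ℝ) α γ := by
  have h := Matrix.nonsing_inv_mul _ (isUnit_det_gmat R ξ hImm)
  have h2 := congrFun (congrFun h α) γ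
  rw [gcon, dot3_sum_left]
  simp only [dot3_smul_left]
  rw [← h2]
  simp only [Matrix.mul_apply, ginv, gmat, Matrix.of_apply]

lemma dot3_gcon_nrm (α : Fin 2) : dot3 (nrm R ξ) (gcon R α ξ) = 0 := by
  rw [gcon, dot3_sum_right]
  simp [dot3_smul_right, dot3_nrm_gcov]

/-- Basis expansion of a vector in terms of `n, g^α`. -/
lemma basis_expand (hImm : LinearIndependent ℝ ![gcov R 0 ξ, gcov R 1 ξ]) (v : V3) :
    v = dot3 v (nrm R ξ) • nrm R ξ + ∑ α, dot3 v (gcov R α ξ) • gcon R α ξ := by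
  set w : V3 := v - (dot3 v (nrm R ξ) • nrm R ξ + ∑ α, dot3 v (gcov R α ξ) • gcon R α ξ) with hw
  have hwg : ∀ γ : Fin 2, dot3 w (gcov R γ ξ) = 0 := by
    intro γ
    rw [hw, sub_eq_add_neg, dot3_add_left, dot3_neg_left, dot3_add_left, dot3_sum_left]
    simp only [dot3_smul_left, dot3_gcon_gcov R ξ hImm, dot3_nrm_gcov]
    rw [Fin.sum_univ_two]
    fin_cases γ <;> simp [Matrix.one_apply, dot3_comm]
  have hwn : dot3 w (nrm R ξ) = 0 := by
    rw [hw, sub_eq_add_neg, dot3_add_left, dot3_neg_left, dot3_add_left, dot3_sum_left]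
    simp only [dot3_smul_left, dot3_nrm_nrm R ξ hImm]
    have : ∀ α : Fin 2, dot3 (gcon R α ξ) (nrm R ξ) = 0 := fun α => by
      rw [dot3_comm]; exact dot3_gcon_nrm R ξ α
    simp [this, dot3_comm]
  have hwc : dot3 (crss R ξ) w = 0 := by
    have : dot3 w (nrm R ξ) = (norm3 (crss R ξ))⁻¹ * dot3 w (crss R ξ) := by
      rw [nrm_eq, dot3_smul_right]
    rw [dot3_comm]
    have hpos := norm3_crss_pos R ξ hImm
    rw [this] at hwn
    rcases mul_eq_zero.mp hwn with h | h
    · exact absurd h (by positivity)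
    · exact h
  -- now w is orthogonal to a basis
  have hM : ∀ i, (Matrix.of ![crss R ξ, gcov R 0 ξ, gcov R 1 ξ]).mulVec w i = 0 := by
    intro i
    have e0 : (Matrix.of ![crss R ξ, gcov R 0 ξ, gcov R 1 ξ]).mulVec w i
        = dot3 (Matrix.of ![crss R ξ, gcov R 0 ξ, gcov R 1 ξ] i) w := rfl
    rw [e0]
    fin_cases i
    · exact hwc
    · show dot3 (gcov R 0 ξ) w = 0
      rw [dot3_comm]; exact hwg 0
    · show dot3 (gcov R 1 ξ) w = 0
      rw [dot3_comm]; exact hwg 1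
  have hdet : IsUnit (Matrix.of ![crss R ξ, gcov R 0 ξ, gcov R 1 ξ]).det := by
    have h0 : (Matrix.of ![crss R ξ, gcov R 0 ξ, gcov R 1 ξ]).det
        = dot3 (crss R ξ) (crss R ξ) := (triple_product_eq_det _ _ _).symm
    rw [h0]
    exact (ne_of_gt (dot3_crss_self_pos R ξ hImm)).isUnit
  have hw0 : w = 0 := by
    have h1 : (Matrix.of ![crss R ξ, gcov R 0 ξ, gcov R 1 ξ]).mulVec w = 0 := funext hM
    have h2 : ((Matrix.of ![crss R ξ, gcov R 0 ξ, gcov R 1 ξ])⁻¹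
        * (Matrix.of ![crss R ξ, gcov R 0 ξ, gcov R 1 ξ])).mulVec w
        = ((Matrix.of ![crss R ξ, gcov R 0 ξ, gcov R 1 ξ])⁻¹).mulVec 0 := by
      rw [← Matrix.mulVec_mulVec, h1]
    rw [Matrix.nonsing_inv_mul _ hdet, Matrix.one_mulVec, Matrix.mulVec_zero] at h2
    exact h2
  have h3 : v - (dot3 v (nrm R ξ) • nrm R ξ + ∑ α, dot3 v (gcov R α ξ) • gcon R α ξ) = 0 := by
    rw [← hw]; exact hw0
  exact sub_eq_zero.mp h3
  
end Geom

section Anal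

variable {f h : V2 → V3} {c : V2 → ℝ} {α : Fin 2} {ξ : V2}

lemma diffAt_comp_proj (hf : DifferentiableAt ℝ f ξ) (i : Fin 3) :
    DifferentiableAt ℝ (fun ξ' => f ξ' i) ξ :=
  ((ContinuousLinearMap.proj (R := ℝ) (φ := fun _ : Fin 3 => ℝ) i).differentiableAt).comp ξ hf

lemma hasFDerivAt_proj (hf : DifferentiableAt ℝ f ξ) (i : Fin 3) :
    HasFDerivAt (fun ξ' => f ξ' i)
      ((ContinuousLinearMap.proj (R := ℝ) (φ := fun _ : Fin 3 => ℝ) i).comp (fderiv ℝ f ξ)) ξ :=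
  ((ContinuousLinearMap.proj (R := ℝ) (φ := fun _ : Fin 3 => ℝ) i).hasFDerivAt).comp ξ hf.hasFDerivAt

lemma diffAt_dot3 (hf : DifferentiableAt ℝ f ξ) (hh : DifferentiableAt ℝ h ξ) :
    DifferentiableAt ℝ (fun ξ' => dot3 (f ξ') (h ξ')) ξ := by
  unfold dot3
  apply DifferentiableAt.fun_sum
  intro i _
  exact (diffAt_comp_proj hf i).mul (diffAt_comp_proj hh i)

lemma pd2_dot3 (hf : DifferentiableAt ℝ f ξ) (hh : DifferentiableAt ℝ h ξ) :
    pd2 (fun ξ' => dot3 (f ξ') (h ξ')) α ξ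
      = dot3 (pd2 f α ξ) (h ξ) + dot3 (f ξ) (pd2 h α ξ) := by
  have H : HasFDerivAt (fun ξ' => dot3 (f ξ') (h ξ'))
      (∑ i : Fin 3, (f ξ i • ((ContinuousLinearMap.proj (R := ℝ) (φ := fun _ : Fin 3 => ℝ) i).comp (fderiv ℝ h ξ))
        + h ξ i • ((ContinuousLinearMap.proj (R := ℝ) (φ := fun _ : Fin 3 => ℝ) i).comp (fderiv ℝ f ξ)))) ξ := by
    unfold dot3
    exact HasFDerivAt.fun_sum (fun i _ => (hasFDerivAt_proj hf i).mul (hasFDerivAt_proj hh i))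
  rw [pd2, H.fderiv]
  simp only [ContinuousLinearMap.coe_sum', Finset.sum_apply, ContinuousLinearMap.add_apply,
    ContinuousLinearMap.coe_smul', Pi.smul_apply, ContinuousLinearMap.coe_comp',
    Function.comp_apply, ContinuousLinearMap.proj_apply, smul_eq_mul]
  rw [dot3, dot3, Finset.sum_add_distrib, add_comm]
  congr 1 <;> exact Finset.sum_congr rfl fun i _ => by rw [pd2]; ring

lemma pd2_smul3 (hc : DifferentiableAt ℝ c ξ) (hf : DifferentiableAt ℝ f ξ) :
    pd2 (fun ξ' => c ξ' • f ξ') α ξ = pd2 c α ξ • f ξ + c ξ • pd2 f α ξ := by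
  rw [pd2, fderiv_fun_smul hc hf]
  simp only [ContinuousLinearMap.add_apply, ContinuousLinearMap.coe_smul', Pi.smul_apply,
    ContinuousLinearMap.smulRight_apply]
  rw [add_comm, pd2, pd2]

lemma pd2_add3 (hf : DifferentiableAt ℝ f ξ) (hh : DifferentiableAt ℝ h ξ) :
    pd2 (fun ξ' => f ξ' + h ξ') α ξ = pd2 f α ξ + pd2 h α ξ := by
  rw [pd2, fderiv_fun_add hf hh]; rfl

lemma pd2_congr_nhds {E : Type*} [NormedAddCommGroup E] [NormedSpace ℝ E]
    {f g : V2 → E} (hfg : f =ᶠ[nhds ξ] g) : pd2 f α ξ = pd2 g α ξ := by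
  rw [pd2, pd2, hfg.fderiv_eq]

lemma pd2_const {E : Type*} [NormedAddCommGroup E] [NormedSpace ℝ E] (e : E) :
    pd2 (fun _ : V2 => e) α ξ = 0 := by
  rw [pd2, fderiv_fun_const]; rfl

lemma diffAt_cross (hf : DifferentiableAt ℝ f ξ) (hh : DifferentiableAt ℝ h ξ) :
    DifferentiableAt ℝ (fun ξ' => (crossProduct (f ξ')) (h ξ')) ξ := by
  rw [differentiableAt_pi]
  intro i
  have e : ∀ ξ', (crossProduct (f ξ')) (h ξ') = ![f ξ' 1 * h ξ' 2 - f ξ' 2 * h ξ' 1,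
      f ξ' 2 * h ξ' 0 - f ξ' 0 * h ξ' 2, f ξ' 0 * h ξ' 1 - f ξ' 1 * h ξ' 0] := fun ξ' => by
    rw [cross_apply]
  simp only [e]
  fin_cases i <;>
    simp only [Matrix.cons_val_zero, Matrix.cons_val_one, Matrix.head_cons,
      Matrix.cons_val_two, Matrix.tail_cons] <;>
    exact ((diffAt_comp_proj hf _).mul (diffAt_comp_proj hh _)).sub
      ((diffAt_comp_proj hf _).mul (diffAt_comp_proj hh _))

end Anal

section Smooth

variable {U : Set V2} {R : V2 → V3} {ξ : V2}

lemma contDiffAt_of_mem (hU : IsOpen U) (hR : ContDiffOn ℝ (⊤ : ℕ∞) R U) (hξ : ξ ∈ U) :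
    ContDiffAt ℝ (⊤ : ℕ∞) R ξ := hR.contDiffAt (hU.mem_nhds hξ)

lemma diffAt_fderivR (hU : IsOpen U) (hR : ContDiffOn ℝ (⊤ : ℕ∞) R U) (hξ : ξ ∈ U) :
    DifferentiableAt ℝ (fderiv ℝ R) ξ := by
  have h1 : ContDiffAt ℝ 1 (fderiv ℝ R) ξ :=
    (contDiffAt_of_mem hU hR hξ).fderiv_right (WithTop.coe_le_coe.mpr le_top)
  exact h1.differentiableAt one_ne_zero

lemma gcov_eq_apply (α : Fin 2) : gcov R α = fun ξ' => fderiv ℝ R ξ' (Pi.single α 1) := rfl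

lemma diffAt_gcov (hU : IsOpen U) (hR : ContDiffOn ℝ (⊤ : ℕ∞) R U) (hξ : ξ ∈ U) (α : Fin 2) :
    DifferentiableAt ℝ (gcov R α) ξ := by
  rw [gcov_eq_apply]
  exact (diffAt_fderivR hU hR hξ).clm_apply (differentiableAt_const _)

lemma pd2_gcov_symm (hU : IsOpen U) (hR : ContDiffOn ℝ (⊤ : ℕ∞) R U) (hξ : ξ ∈ U) (α β : Fin 2) :
    pd2 (gcov R β) α ξ = pd2 (gcov R α) β ξ := by
  have hR2 : ContDiffAt ℝ 2 R ξ := (contDiffAt_of_mem hU hR hξ).of_le (WithTop.coe_le_coe.mpr le_top)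
  have hsymm := hR2.isSymmSndFDerivAt (by simp)
  have hfd := diffAt_fderivR hU hR hξ
  have key : ∀ γ δ : Fin 2, pd2 (gcov R γ) δ ξ
      = fderiv ℝ (fderiv ℝ R) ξ (Pi.single δ 1) (Pi.single γ 1) := by
    intro γ δ
    rw [pd2, gcov_eq_apply, fderiv_clm_apply hfd (differentiableAt_const _)]
    simp
  rw [key, key, hsymm]

lemma diffAt_crss (hU : IsOpen U) (hR : ContDiffOn ℝ (⊤ : ℕ∞) R U) (hξ : ξ ∈ U) :
    DifferentiableAt ℝ (crss R) ξ :=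
  diffAt_cross (diffAt_gcov hU hR hξ 0) (diffAt_gcov hU hR hξ 1)

lemma diffAt_nrm (hU : IsOpen U) (hR : ContDiffOn ℝ (⊤ : ℕ∞) R U)
    (hImm : LinearIndependent ℝ ![gcov R 0 ξ, gcov R 1 ξ]) (hξ : ξ ∈ U) :
    DifferentiableAt ℝ (nrm R) ξ := by
  have hc := diffAt_crss hU hR hξ
  have hd : DifferentiableAt ℝ (fun ξ' => dot3 (crss R ξ') (crss R ξ')) ξ :=
    diffAt_dot3 hc hc
  have hs : DifferentiableAt ℝ (fun ξ' => norm3 (crss R ξ')) ξ := by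
    have h2 : ContDiffAt ℝ 1 Real.sqrt (dot3 (crss R ξ) (crss R ξ)) :=
      Real.contDiffAt_sqrt (ne_of_gt (dot3_crss_self_pos R ξ hImm))
    exact (h2.differentiableAt one_ne_zero).comp ξ hd
  have hinv : DifferentiableAt ℝ (fun ξ' => (norm3 (crss R ξ'))⁻¹) ξ :=
    hs.inv (ne_of_gt (norm3_crss_pos R ξ hImm))
  exact hinv.smul hc

end Smooth

section Main

variable {U : Set V2} {R : V2 → V3} {ξ : V2}

lemma dot3_pd2nrm_nrm (hU : IsOpen U) (hR : ContDiffOn ℝ (⊤ : ℕ∞) R U)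
    (hImmU : ∀ ζ ∈ U, LinearIndependent ℝ ![gcov R 0 ζ, gcov R 1 ζ]) (hξ : ξ ∈ U) (α : Fin 2) :
    dot3 (pd2 (nrm R) α ξ) (nrm R ξ) = 0 := by
  have hdn := diffAt_nrm hU hR (hImmU ξ hξ) hξ
  have hev : (fun ξ' => dot3 (nrm R ξ') (nrm R ξ')) =ᶠ[nhds ξ] (fun _ => (1 : ℝ)) := by
    filter_upwards [hU.mem_nhds hξ] with ζ hζ
    exact dot3_nrm_nrm R ζ (hImmU ζ hζ)
  have h0 : pd2 (fun ξ' => dot3 (nrm R ξ') (nrm R ξ')) α ξ = 0 := by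
    rw [pd2_congr_nhds hev, pd2_const]
  rw [pd2_dot3 hdn hdn] at h0
  have h1 := dot3_comm (nrm R ξ) (pd2 (nrm R) α ξ)
  linarith

lemma dot3_pd2nrm_gcov (hU : IsOpen U) (hR : ContDiffOn ℝ (⊤ : ℕ∞) R U)
    (hImmU : ∀ ζ ∈ U, LinearIndependent ℝ ![gcov R 0 ζ, gcov R 1 ζ]) (hξ : ξ ∈ U) (α β : Fin 2) :
    dot3 (pd2 (nrm R) α ξ) (gcov R β ξ) = - bcov R α β ξ := by
  have hdn := diffAt_nrm hU hR (hImmU ξ hξ) hξ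
  have h0 : pd2 (fun ξ' => dot3 (nrm R ξ') (gcov R β ξ')) α ξ = 0 := by
    have he : (fun ξ' => dot3 (nrm R ξ') (gcov R β ξ')) = fun _ => (0 : ℝ) :=
      funext fun ζ => dot3_nrm_gcov R ζ β
    rw [he, pd2_const]
  rw [pd2_dot3 hdn (diffAt_gcov hU hR hξ β)] at h0
  have hb : bcov R α β ξ = dot3 (nrm R ξ) (pd2 (gcov R β) α ξ) := rfl
  linarith

lemma weingarten (hU : IsOpen U) (hR : ContDiffOn ℝ (⊤ : ℕ∞) R U)
    (hImmU : ∀ ζ ∈ U, LinearIndependent ℝ ![gcov R 0 ζ, gcov R 1 ζ]) (hξ : ξ ∈ U) (α : Fin 2) :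
    pd2 (nrm R) α ξ = -(∑ β, bcov R α β ξ • gcon R β ξ) := by
  have hbe := basis_expand R ξ (hImmU ξ hξ) (pd2 (nrm R) α ξ)
  rw [dot3_pd2nrm_nrm hU hR hImmU hξ α, zero_smul, zero_add] at hbe
  rw [hbe, ← Finset.sum_neg_distrib]
  exact Finset.sum_congr rfl fun β _ => by
    rw [dot3_pd2nrm_gcov hU hR hImmU hξ α β, neg_smul]
  
lemma bcov_symm (hU : IsOpen U) (hR : ContDiffOn ℝ (⊤ : ℕ∞) R U) (hξ : ξ ∈ U) (α β : Fin 2) :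
    bcov R α β ξ = bcov R β α ξ := by
  rw [bcov, bcov, pd2_gcov_symm hU hR hξ α β]

lemma strain_normal (hU : IsOpen U) (hR : ContDiffOn ℝ (⊤ : ℕ∞) R U)
    (hImmU : ∀ ζ ∈ U, LinearIndependent ℝ ![gcov R 0 ζ, gcov R 1 ζ]) (hξ : ξ ∈ U)
    {u : V2 → V3} (hu : ContDiffOn ℝ (⊤ : ℕ∞) u U) :
    strain R (fun ξ' => dot3 (u ξ') (nrm R ξ') • nrm R ξ') ξ
      = (-(dot3 (u ξ) (nrm R ξ))) • shapeOp R ξ := by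
  have hImm := hImmU ξ hξ
  have hdn := diffAt_nrm hU hR hImm hξ
  have hdu : DifferentiableAt ℝ u ξ :=
    (hu.contDiffAt (hU.mem_nhds hξ)).differentiableAt (by simp)
  have hdf : DifferentiableAt ℝ (fun ξ' => dot3 (u ξ') (nrm R ξ')) ξ := diffAt_dot3 hdu hdn
  set f : V2 → ℝ := fun ξ' => dot3 (u ξ') (nrm R ξ') with hfdef
  -- projection of the derivative
  have key : ∀ α : Fin 2, (Pmat R ξ).mulVec (pd2 (fun ξ' => f ξ' • nrm R ξ') α ξ)
      = f ξ • pd2 (nrm R) α ξ := by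
    intro α
    rw [pd2_smul3 hdf hdn, Pmat_mulVec]
    rw [dot3_add_right, dot3_smul_right, dot3_smul_right,
      dot3_comm (nrm R ξ) (nrm R ξ), dot3_nrm_nrm R ξ hImm,
      dot3_comm (nrm R ξ) (pd2 (nrm R) α ξ), dot3_pd2nrm_nrm hU hR hImmU hξ α]
    simp only [mul_one, mul_zero, add_zero]
    abel
  set T1 : Matrix (Fin 3) (Fin 3) ℝ
    := ∑ α, ∑ β, bcov R α β ξ • outer (gcon R β ξ) (gcon R α ξ) with hT1def
  have hcov : covDer R (fun ξ' => f ξ' • nrm R ξ') ξ = (-(f ξ)) • T1 := by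
    rw [covDer, hT1def, Finset.smul_sum]
    refine Finset.sum_congr rfl fun α _ => ?_
    rw [key α, weingarten hU hR hImmU hξ α, smul_neg, outer_neg_left, outer_smul_left,
      outer_sum_left, neg_smul, Finset.smul_sum, Finset.smul_sum]
    refine congrArg Neg.neg (Finset.sum_congr rfl fun β _ => ?_)
    rw [outer_smul_left]
  have hT1 : T1 = shapeOp R ξ := by
    rw [hT1def, shapeOp, Finset.sum_comm]
    refine Finset.sum_congr rfl fun β _ => Finset.sum_congr rfl fun α _ => ?_
    rw [bcov_symm hU hR hξ α β]
  have hT1t : T1ᵀ = shapeOp R ξ := by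
    rw [hT1def, Matrix.transpose_sum, shapeOp]
    refine Finset.sum_congr rfl fun α _ => ?_
    rw [Matrix.transpose_sum]
    refine Finset.sum_congr rfl fun β _ => ?_
    rw [Matrix.transpose_smul, transpose_outer]
  rw [strain, hcov, Matrix.transpose_smul, hT1t, hT1]
  ext i j
  simp only [Matrix.smul_apply, Matrix.add_apply, smul_eq_mul]
  ring

end Main

/-- Splitting of the rate-of-strain tensor: `E(u) = E(u_T) - u_N B`, equivalently
`½(∇_Γ(u_N n) + (∇_Γ(u_N n))ᵀ) = -u_N B`. -/
theorem stmt11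
    (U : Set V2) (hU : IsOpen U)
    (R : V2 → V3) (hR : ContDiffOn ℝ (⊤ : ℕ∞) R U)
    (hImm : ∀ ξ ∈ U, LinearIndependent ℝ ![gcov R 0 ξ, gcov R 1 ξ])
    (u : V2 → V3) (hu : ContDiffOn ℝ (⊤ : ℕ∞) u U)
    (ξ : V2) (hξ : ξ ∈ U) :
    (strain R u ξ
      = strain R (fun ξ' => (Pmat R ξ').mulVec (u ξ')) ξ
        - dot3 (u ξ) (nrm R ξ) • shapeOp R ξ)
    ∧
    (strain R (fun ξ' => dot3 (u ξ') (nrm R ξ') • nrm R ξ') ξ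
      = (-(dot3 (u ξ) (nrm R ξ))) • shapeOp R ξ) := by
  have h2 := strain_normal hU hR hImm hξ hu
  refine ⟨?_, h2⟩
  have hImmξ := hImm ξ hξ
  have hdn := diffAt_nrm hU hR hImmξ hξ
  have hdu : DifferentiableAt ℝ u ξ :=
    (hu.contDiffAt (hU.mem_nhds hξ)).differentiableAt (by simp)
  set w : V2 → V3 := fun ξ' => dot3 (u ξ') (nrm R ξ') • nrm R ξ' with hwdef
  set Pu : V2 → V3 := fun ξ' => (Pmat R ξ').mulVec (u ξ') with hPudef
  have hPu_eq : Pu = fun ξ' => u ξ' - dot3 (nrm R ξ') (u ξ') • nrm R ξ' :=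
    funext fun ξ' => Pmat_mulVec R ξ' (u ξ')
  have hdw : DifferentiableAt ℝ w ξ := (diffAt_dot3 hdu hdn).smul hdn
  have hdPu : DifferentiableAt ℝ Pu ξ := by
    rw [hPu_eq]
    exact hdu.sub ((diffAt_dot3 hdn hdu).smul hdn)
  have hfun : u = fun ξ' => Pu ξ' + w ξ' := by
    funext ξ'
    rw [hPu_eq, hwdef]
    simp only
    rw [dot3_comm (nrm R ξ') (u ξ')]
    abel
  have hpd : ∀ α : Fin 2, pd2 u α ξ = pd2 Pu α ξ + pd2 w α ξ := by
    intro α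
    conv_lhs => rw [hfun]
    exact pd2_add3 hdPu hdw
  have hcov : covDer R u ξ = covDer R Pu ξ + covDer R w ξ := by
    rw [covDer, covDer, covDer, ← Finset.sum_add_distrib]
    refine Finset.sum_congr rfl fun α _ => ?_
    rw [hpd α, Matrix.mulVec_add, outer_add_left]
  have hstrain : strain R u ξ = strain R Pu ξ + strain R w ξ := by
    rw [strain, strain, strain, hcov, Matrix.transpose_add, smul_add]
    ext i j
    simp only [Matrix.smul_apply, Matrix.add_apply, smul_eq_mul]
    ring
  rw [hstrain, h2, neg_smul, sub_eq_add_neg]
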